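/- Let f ∈ ℂ[x] be a polynomial of degree d ≥ 1. If there are more than 2d distinct points α on the unit circle such that |f(α)| = 1, then f(x) = ξ·x^d for some ξ ∈ ℂ with |ξ| = 1. -/

import Mathlib

/-!
On the unit circle `conj α = α⁻¹`, so the reversed conjugate `g = X ^ d * conj(f)(1 / X)`
satisfies `f(α) * g(α) = α ^ d * |f(α)| ^ 2 = α ^ d` at every point of `S`. The polynomial
`f * g - X ^ d` has degree at most `2 * d` and more than `2 * d` roots, so `f * g = X ^ d`.
Since `X` is prime, `f` is a unit times `X ^ d`, and evaluating at a point of `S` shows that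
the unit has modulus one.
-/

open Polynomial ComplexConjugate

namespace Polynomial

theorem eq_C_leadingCoeff_mul_X_pow_of_dvd_X_pow {R : Type*} [CommRing R] [IsDomain R]
    {f : R[X]} {n : ℕ} (h : f ∣ X ^ n) : f = C f.leadingCoeff * X ^ f.natDegree := by
  obtain ⟨i, -, u, hu⟩ := (dvd_prime_pow prime_X n).1 h
  obtain ⟨c, hc, hcu⟩ := Polynomial.isUnit_iff.1 (u⁻¹).isUnit
  have hf : f = C c * X ^ i := by rw [hcu, ← hu, mul_comm, Units.mul_inv_cancel_right]
  rw [hf, leadingCoeff_C_mul_X_pow, natDegree_C_mul_X_pow _ _ hc.ne_zero]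

theorem eval_reflect_map_conj_of_norm_eq_one {f : ℂ[X]} {N : ℕ} (hf : f.natDegree ≤ N) {α : ℂ}
    (hα : ‖α‖ = 1) : (reflect N (f.map conj)).eval α = α ^ N * conj (f.eval α) := by
  have hα0 : α ≠ 0 := norm_ne_zero_iff.1 (hα ▸ one_ne_zero)
  let := invertibleOfNonzero (inv_ne_zero hα0)
  have h := eval₂_reflect_mul_pow (RingHom.id ℂ) α⁻¹ N (f.map conj) (natDegree_map_le.trans hf)
  simp only [eval₂_id, invOf_eq_inv, inv_inv] at h
  calc _ = α ^ N * ((reflect N (f.map conj)).eval α * α⁻¹ ^ N) := by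
        rw [mul_left_comm, ← mul_pow, mul_inv_cancel₀ hα0, one_pow, mul_one]
    _ = α ^ N * conj (f.eval α) := by rw [h, RCLike.inv_eq_conj hα, eval_map_apply]

theorem mul_reflect_map_conj_eq_X_pow {f : ℂ[X]} {N : ℕ} (hf : f.natDegree ≤ N) {S : Finset ℂ}
    (hcard : 2 * N < S.card) (hS : ∀ α ∈ S, ‖α‖ = 1 ∧ ‖f.eval α‖ = 1) :
    f * reflect N (f.map conj) = X ^ N := by
  rw [← sub_eq_zero]
  refine eq_zero_of_natDegree_lt_card_of_eval_eq_zero' _ S (fun α hα ↦ ?_) ?_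
  · obtain ⟨hα, hfα⟩ := hS α hα
    rw [eval_sub, eval_mul, eval_reflect_map_conj_of_norm_eq_one hf hα, mul_left_comm,
      RCLike.mul_conj, hfα]
    simp
  · have hg : (reflect N (f.map conj)).natDegree ≤ N :=
      natDegree_reflect_le.trans (max_le le_rfl (natDegree_map_le.trans hf))
    refine (natDegree_sub_le _ _).trans_lt (lt_of_le_of_lt (max_le ?_ ?_) hcard)
    · exact natDegree_mul_le.trans (by omega)
    · rw [natDegree_X_pow]; omega

end Polynomial

theorem stmt_12_general (d : ℕ) (f : ℂ[X]) (hfd : f.natDegree = d)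
    (S : Finset ℂ) (hcard : 2 * d < S.card)
    (hS : ∀ α ∈ S, ‖α‖ = 1 ∧ ‖f.eval α‖ = 1) :
    ∃ ξ : ℂ, ‖ξ‖ = 1 ∧ f = C ξ * X ^ d := by
  have hdvd : f ∣ X ^ d := ⟨_, (mul_reflect_map_conj_eq_X_pow hfd.le hcard hS).symm⟩
  have hf : f = C f.leadingCoeff * X ^ d := hfd ▸ eq_C_leadingCoeff_mul_X_pow_of_dvd_X_pow hdvd
  obtain ⟨α, hαS⟩ := Finset.card_pos.1 (by omega : 0 < S.card)
  obtain ⟨hα, hfα⟩ := hS α hαS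
  refine ⟨f.leadingCoeff, ?_, hf⟩
  rw [hf] at hfα
  simpa [hα] using hfα

theorem stmt_12 (d : ℕ) (hd : 1 ≤ d) (f : ℂ[X]) (hfd : f.natDegree = d)
    (S : Finset ℂ) (hcard : 2 * d < S.card)
    (hS : ∀ α ∈ S, ‖α‖ = 1 ∧ ‖f.eval α‖ = 1) :
    ∃ ξ : ℂ, ‖ξ‖ = 1 ∧ f = C ξ * X ^ d :=
  stmt_12_general d f hfd S hcard hS
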